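/- Let A and Σ be symmetric positive definite d×d real matrices and set D̃ := AΣA − I_d. Then ⟨AΣD̃, D̃⟩_F = tr(AΣD̃²) = tr((AΣA)^{1/2}(D̃ A^{−1} D̃)(AΣA)^{1/2}) ≥ 0. -/

import Mathlib

open MeasureTheory ProbabilityTheory Filter Real Matrix
open scoped RealInnerProductSpace Topology NNReal

noncomputable section

/-- Action of a `d × d` matrix on a vector of `EuclideanSpace ℝ (Fin d)`. -/
def mvec {d : ℕ} (A : Matrix (Fin d) (Fin d) ℝ) (x : EuclideanSpace ℝ (Fin d)) :
    EuclideanSpace ℝ (Fin d) :=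
  Matrix.toEuclideanCLM (𝕜 := ℝ) A x

/-- Outer product `x yᵀ` of two Euclidean vectors, as a matrix. -/
def outer {d : ℕ} (x y : EuclideanSpace ℝ (Fin d)) : Matrix (Fin d) (Fin d) ℝ :=
  Matrix.vecMulVec (fun i => x i) (fun i => y i)

/-- Frobenius norm of a matrix. -/
def frob {d : ℕ} (M : Matrix (Fin d) (Fin d) ℝ) : ℝ :=
  Real.sqrt (∑ i, ∑ j, (M i j) ^ 2)

/-- Frobenius inner product of two matrices. -/
def frobInner {d : ℕ} (M N : Matrix (Fin d) (Fin d) ℝ) : ℝ :=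
  (Mᵀ * N).trace

/-- Smallest eigenvalue of a symmetric matrix, as the infimum of the quadratic
form over the unit sphere. -/
def lmin {d : ℕ} (M : Matrix (Fin d) (Fin d) ℝ) : ℝ :=
  ⨅ v : {v : EuclideanSpace ℝ (Fin d) // ‖v‖ = 1},
    ⟪(v : EuclideanSpace ℝ (Fin d)), mvec M v⟫

/-- Largest eigenvalue of a symmetric matrix, as the supremum of the quadratic
form over the unit sphere. -/
def lmax {d : ℕ} (M : Matrix (Fin d) (Fin d) ℝ) : ℝ :=
  ⨆ v : {v : EuclideanSpace ℝ (Fin d) // ‖v‖ = 1},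
    ⟪(v : EuclideanSpace ℝ (Fin d)), mvec M v⟫

/-- Weighted averaging weights `w_{t+1} = ln(t+1)^τ / ∑_{k=0}^t ln(k+1)^τ`. -/
def wWeight (τ : ℝ) (t : ℕ) : ℝ :=
  Real.log ((t : ℝ) + 1) ^ τ / ∑ k ∈ Finset.range (t + 1), Real.log ((k : ℝ) + 1) ^ τ

open scoped ComplexOrder in
/-- The positive semidefinite square root of a positive semidefinite matrix
(the definition `Matrix.PosSemidef.sqrt` of the older Mathlib, since removed). -/
def Matrix.PosSemidef.sqrt {n 𝕜 : Type*} [Fintype n] [RCLike 𝕜] [DecidableEq n]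
    {A : Matrix n n 𝕜} (hA : A.PosSemidef) : Matrix n n 𝕜 :=
  hA.1.eigenvectorUnitary.1 * diagonal ((↑) ∘ (√·) ∘ hA.1.eigenvalues) *
  (star hA.1.eigenvectorUnitary : Matrix n n 𝕜)

/-!
Write `R := (AΣA)^{1/2}`. The matrix `D̃ = AΣA - 1` is symmetric and commutes with `AΣA = R²`,
so `tr(AΣD̃²) = tr(AΣA · D̃A⁻¹D̃) = tr(R (D̃A⁻¹D̃) R)` by cyclicity of the trace. The last matrix
is a congruence `R D̃ᵀ A⁻¹ D̃ Rᵀ` of the positive definite `A⁻¹`, hence positive semidefinite.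
-/

open scoped MatrixOrder ComplexOrder

namespace Matrix

section Sqrt

variable {n 𝕜 : Type*} [Fintype n] [DecidableEq n] [RCLike 𝕜] {A : Matrix n n 𝕜}

theorem PosSemidef.sqrt_eq_cfcSqrt (hA : A.PosSemidef) : hA.sqrt = CFC.sqrt A := by
  rw [CFC.sqrt_eq_cfc, cfc_nnreal_eq_real _ A, hA.1.cfc_eq]
  simp only [IsHermitian.cfc, Unitary.conjStarAlgAut_apply, PosSemidef.sqrt]
  congr 3
  funext i
  simp [max_eq_left (hA.eigenvalues_nonneg i)]

theorem PosSemidef.posSemidef_sqrt (hA : A.PosSemidef) : hA.sqrt.PosSemidef :=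
  hA.sqrt_eq_cfcSqrt ▸ (CFC.sqrt_nonneg A).posSemidef

theorem PosSemidef.sqrt_mul_sqrt (hA : A.PosSemidef) : hA.sqrt * hA.sqrt = A :=
  hA.sqrt_eq_cfcSqrt ▸ CFC.sqrt_mul_sqrt_self A hA.nonneg

theorem PosSemidef.trace_sqrt_mul_mul_sqrt_nonneg (hA : A.PosSemidef) {X : Matrix n n 𝕜}
    (hX : X.PosSemidef) : 0 ≤ (hA.sqrt * X * hA.sqrt).trace :=
  (hA.posSemidef_sqrt.isHermitian.eq ▸ hX.mul_mul_conjTranspose_same hA.sqrt).trace_nonneg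

end Sqrt

theorem trace_mul_mul_inv_mul_of_commute {n R : Type*} [Fintype n] [DecidableEq n] [CommRing R]
    {A B D : Matrix n n R} (hA : IsUnit A.det) (hD : Commute D (B * A)) :
    (B * A * (D * A⁻¹ * D)).trace = (B * D * D).trace := by
  calc (B * A * (D * A⁻¹ * D)).trace = (D * (B * A) * A⁻¹ * D).trace := by
        rw [hD.eq]; simp only [Matrix.mul_assoc]
    _ = (D * (B * D)).trace := by
        simp only [Matrix.mul_assoc, mul_nonsing_inv_cancel_left _ _ hA]
    _ = (B * D * D).trace := by rw [trace_mul_comm, Matrix.mul_assoc]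

end Matrix

theorem frobInner_eq_trace_mul_of_isSymm {d : ℕ} (M : Matrix (Fin d) (Fin d) ℝ)
    {D : Matrix (Fin d) (Fin d) ℝ} (hD : D.IsSymm) : frobInner M D = (M * D).trace := by
  rw [frobInner, ← trace_transpose, transpose_mul, transpose_transpose, hD.eq, trace_mul_comm]

theorem fulladagrad_drift_positivity_general
    (d : ℕ)
    (A S : Matrix (Fin d) (Fin d) ℝ) (hA : A.PosDef)
    (hASA : (A * S * A).PosSemidef)
    (Dt : Matrix (Fin d) (Fin d) ℝ) (hDt : Dt = A * S * A - 1) :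
    frobInner (A * S * Dt) Dt = (A * S * Dt * Dt).trace ∧
      (A * S * Dt * Dt).trace =
        (hASA.sqrt * (Dt * A⁻¹ * Dt) * hASA.sqrt).trace ∧
      0 ≤ frobInner (A * S * Dt) Dt := by
  have hDt_herm : Dt.IsHermitian := hDt ▸ hASA.isHermitian.sub isHermitian_one
  have hfrob : frobInner (A * S * Dt) Dt = (A * S * Dt * Dt).trace :=
    frobInner_eq_trace_mul_of_isSymm _ (isHermitian_iff_isSymm.mp hDt_herm)
  have hcomm : Commute Dt (A * S * A) := hDt ▸ (Commute.refl _).sub_left (Commute.one_left _)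
  have hsqrt : (A * S * Dt * Dt).trace = (hASA.sqrt * (Dt * A⁻¹ * Dt) * hASA.sqrt).trace := by
    rw [trace_mul_comm (hASA.sqrt * _), ← Matrix.mul_assoc, hASA.sqrt_mul_sqrt,
      trace_mul_mul_inv_mul_of_commute ((isUnit_iff_isUnit_det A).mp hA.isUnit) hcomm]
  have hDAD := hA.inv.posSemidef.conjTranspose_mul_mul_same Dt
  rw [hDt_herm.eq] at hDAD
  exact ⟨hfrob, hsqrt, hfrob ▸ hsqrt ▸ hASA.trace_sqrt_mul_mul_sqrt_nonneg hDAD⟩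

theorem fulladagrad_drift_positivity
    (d : ℕ) (hd : 1 ≤ d)
    (A S : Matrix (Fin d) (Fin d) ℝ) (hA : A.PosDef) (hS : S.PosDef)
    (hASA : (A * S * A).PosSemidef)
    (Dt : Matrix (Fin d) (Fin d) ℝ) (hDt : Dt = A * S * A - 1) :
    frobInner (A * S * Dt) Dt = (A * S * Dt * Dt).trace ∧
      (A * S * Dt * Dt).trace =
        (hASA.sqrt * (Dt * A⁻¹ * Dt) * hASA.sqrt).trace ∧
      0 ≤ frobInner (A * S * Dt) Dt :=
  fulladagrad_drift_positivity_general d A S hA hASA Dt hDt
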